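/- arXiv:1805.12587 — 2 statements merged into one kernel-verified Lean document; each statement's English description precedes it below -/
import Mathlib

section
/- Let α ∈ (1/2,1) and let λ, μ, ν, u be complex numbers. Then there exist constants C > 0, θ > 0 and ρ > 0 such that the doubly indexed coefficients satisfy |a_{k,ℓ}| ≤ C·θ^{ℓ}·ρ^{k}·(k − k(ℓ) + 1)^{α/2 − 1}·(max(ℓ,1))^{α/2 − 1} for every ℓ ≥ 0 and every k ≥ k(ℓ). Consequently there exists R > 0 such that for every t ∈ (0,R) the doubly indexed series Σ_{ℓ≥0} Σ_{k≥k(ℓ)} |a_{k,ℓ}| · t^{αk−ℓ} converges. -/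
open Finset

/-- Valuation `k(ℓ) = max(2ℓ−1, 1)` (case `α ∈ (1/2,1)`). -/
def kval (l : ℕ) : ℕ := max (2 * l - 1) 1

/-- The double discrete convolution
`a*²_{m,ℓ} = ∑_{k₁+k₂=m, ℓ₁+ℓ₂=ℓ, kᵢ≥1, ℓᵢ≥0} a_{k₁,ℓ₁} a_{k₂,ℓ₂}`. -/
noncomputable def dconv (a : ℕ → ℕ → ℂ) (m l : ℕ) : ℂ :=
  ∑ k₁ ∈ Finset.Ico 1 m, ∑ l₁ ∈ Finset.range (l + 1), a k₁ l₁ * a (m - k₁) (l - l₁)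

/-- The doubly indexed coefficients `a_{k,ℓ}` of the non-homogeneous fractional
Riccati equation, case `α ∈ (1/2,1)` with initial condition `u`. -/
def IsDoubleRiccatiSeq (α : ℝ) (lam mu nu u : ℂ) (a : ℕ → ℕ → ℂ) : Prop :=
  a 1 0 = nu / (Real.Gamma (α + 1) : ℂ) ∧
  a 1 1 = u / (Real.Gamma α : ℂ) ∧
  (∀ l : ℕ, 2 ≤ l → a 1 l = 0) ∧
  (∀ k l : ℕ, k < kval l → a k l = 0) ∧
  (∀ l k : ℕ, max (kval l) 2 ≤ k →
    a k l = (mu * a (k - 1) l + lam * dconv a (k - 1) l) *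
      ((Real.Gamma (α * ((k:ℝ) - 1) - (l:ℝ) + 1) / Real.Gamma (α * (k:ℝ) - (l:ℝ) + 1) : ℝ) : ℂ))

/-!
Majorize `a k l` by `C ρ^k w k w l` with `w n = 1/(n+1)²`. These weights are almost closed under
discrete convolution, `∑_{i ≤ m} w i w (m-i) ≤ 8 w (m+1)`, so the quadratic term of the recursion
costs only a constant factor, and the Gamma ratio `Γ(x)/Γ(x+α)` in the recursion stays bounded
because the supports of the coefficients keep `x` away from `0`. Strong induction on `k` then
closes with a geometric `ρ`, and both conclusions are read off this majorant.
-/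
noncomputable def invSqSucc (n : ℕ) : ℝ := (((n : ℝ) + 1) ^ 2)⁻¹

lemma invSqSucc_pos (n : ℕ) : 0 < invSqSucc n := by unfold invSqSucc; positivity

lemma invSqSucc_succ_le (n : ℕ) : invSqSucc (n + 1) ≤ invSqSucc n := by
  unfold invSqSucc; push_cast; gcongr; linarith

lemma invSqSucc_le_four_mul_succ (n : ℕ) : invSqSucc n ≤ 4 * invSqSucc (n + 1) := by
  unfold invSqSucc
  rw [← div_eq_mul_inv, le_div_iff₀ (by positivity), ← div_eq_inv_mul,
    div_le_iff₀ (by positivity)]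
  push_cast
  nlinarith [(n.cast_nonneg : (0:ℝ) ≤ n)]

lemma summable_invSqSucc : Summable invSqSucc := by
  have h := (summable_nat_add_iff 1).mpr (Real.summable_nat_pow_inv.mpr one_lt_two)
  show Summable fun n : ℕ => (((n : ℝ) + 1) ^ 2)⁻¹
  exact_mod_cast h

lemma sum_range_invSqSucc_le (n : ℕ) : ∑ i ∈ range n, invSqSucc i ≤ 2 := by
  have h := sum_Ioo_inv_sq_le (α := ℝ) 0 (n + 1)
  rw [← Ico_add_one_left_eq_Ioo, sum_Ico_eq_sum_range] at h
  simpa [invSqSucc, add_comm] using h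

lemma invSqSucc_mul_invSqSucc_le (i j : ℕ) :
    invSqSucc i * invSqSucc j ≤ 2 * invSqSucc (i + j + 1) * (invSqSucc i + invSqSucc j) := by
  unfold invSqSucc
  have hA : (0:ℝ) < i + 1 := by positivity
  have hB : (0:ℝ) < j + 1 := by positivity
  push_cast
  rw [show (i:ℝ) + j + 1 + 1 = (i + 1) + (j + 1) by ring]
  generalize (i:ℝ) + 1 = A at *
  generalize (j:ℝ) + 1 = B at *
  field_simp
  nlinarith [sq_nonneg (A - B)]

lemma sum_range_invSqSucc_mul_le (m : ℕ) :
    ∑ i ∈ range (m + 1), invSqSucc i * invSqSucc (m - i) ≤ 8 * invSqSucc (m + 1) := by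
  have hrefl : ∑ i ∈ range (m + 1), invSqSucc (m - i) = ∑ i ∈ range (m + 1), invSqSucc i :=
    sum_range_reflect invSqSucc (m + 1)
  calc ∑ i ∈ range (m + 1), invSqSucc i * invSqSucc (m - i)
      ≤ ∑ i ∈ range (m + 1), 2 * invSqSucc (m + 1) * (invSqSucc i + invSqSucc (m - i)) := by
        refine sum_le_sum fun i hi => ?_
        have := invSqSucc_mul_invSqSucc_le i (m - i)
        rwa [Nat.add_sub_cancel' (Nat.lt_succ_iff.mp (mem_range.mp hi))] at this
    _ = 2 * invSqSucc (m + 1) * (2 * ∑ i ∈ range (m + 1), invSqSucc i) := by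
        rw [← mul_sum, sum_add_distrib, hrefl]; ring
    _ ≤ 2 * invSqSucc (m + 1) * (2 * 2) := by
        gcongr
        · exact mul_nonneg zero_le_two (invSqSucc_pos _).le
        · exact sum_range_invSqSucc_le _
    _ = 8 * invSqSucc (m + 1) := by ring

lemma Real.Gamma_div_Gamma_add_le {x β : ℝ} (hx : 0 < x) (hβ : 0 ≤ β) :
    Gamma x / Gamma (x + β) ≤ (1 + β / x) * (1 + β) := by
  have hGxβ := Gamma_pos_of_pos (by linarith : 0 < x + β)
  have hmono : Gamma (x + 2) ≤ Gamma (x + β + 2) :=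
    Gamma_strictMonoOn_Ici.monotoneOn (by rw [Set.mem_Ici]; linarith) (by rw [Set.mem_Ici]; linarith)
      (by linarith)
  have hrec : ∀ y, 0 < y → Gamma (y + 2) = (y + 1) * y * Gamma y := fun y hy => by
    rw [show y + 2 = (y + 1) + 1 by ring, Gamma_add_one (by linarith), Gamma_add_one hy.ne']
    ring
  rw [hrec x hx, hrec (x + β) (by linarith)] at hmono
  have hfac : (x + β + 1) * (x + β) ≤ (x + 1) * x * ((1 + β / x) * (1 + β)) := by
    rw [show (x + 1) * x * ((1 + β / x) * (1 + β)) = (x + 1) * (x + β) * (1 + β) by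
      field_simp]
    nlinarith [mul_nonneg (mul_nonneg hβ hx.le) (by linarith : (0:ℝ) ≤ x + β)]
  rw [div_le_iff₀ hGxβ]
  refine le_of_mul_le_mul_left ?_ (by positivity : 0 < (x + 1) * x)
  calc (x + 1) * x * Gamma x ≤ (x + β + 1) * (x + β) * Gamma (x + β) := hmono
    _ ≤ (x + 1) * x * ((1 + β / x) * (1 + β)) * Gamma (x + β) := by gcongr
    _ = (x + 1) * x * ((1 + β / x) * (1 + β) * Gamma (x + β)) := by ring

lemma two_mul_le_succ_of_kval_le {k l : ℕ} (h : kval l ≤ k) : 2 * l ≤ k + 1 := by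
  unfold kval at h
  omega

lemma two_mul_le_succ_of_ne_zero {a : ℕ → ℕ → ℂ} (hvan : ∀ k l, k < kval l → a k l = 0)
    {k l : ℕ} (h : a k l ≠ 0) : 2 * l ≤ k + 1 :=
  two_mul_le_succ_of_kval_le (not_lt.mp fun hk => h (hvan k l hk))

lemma two_mul_le_add_two_of_dconv_ne_zero {a : ℕ → ℕ → ℂ}
    (hvan : ∀ k l, k < kval l → a k l = 0) {k l : ℕ} (h : dconv a k l ≠ 0) : 2 * l ≤ k + 2 := by
  obtain ⟨k₁, hk₁, h⟩ := exists_ne_zero_of_sum_ne_zero h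
  obtain ⟨l₁, hl₁, h⟩ := exists_ne_zero_of_sum_ne_zero h
  obtain ⟨h₁, h₂⟩ := mul_ne_zero_iff.mp h
  have := two_mul_le_succ_of_ne_zero hvan h₁
  have := two_mul_le_succ_of_ne_zero hvan h₂
  rw [mem_Ico] at hk₁
  rw [mem_range] at hl₁
  omega

lemma norm_dconv_le {a : ℕ → ℕ → ℂ} {C ρ : ℝ} (hρ : 0 ≤ ρ) {k : ℕ}
    (H : ∀ k' < k, ∀ l', ‖a k' l'‖ ≤ C * ρ ^ k' * (invSqSucc k' * invSqSucc l')) (l : ℕ) :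
    ‖dconv a k l‖ ≤ C ^ 2 * ρ ^ k * ((8 * invSqSucc (k + 1)) * (8 * invSqSucc (l + 1))) := by
  have hw := fun n => (invSqSucc_pos n).le
  calc ‖dconv a k l‖
      ≤ ∑ k₁ ∈ Ico 1 k, ∑ l₁ ∈ range (l + 1), ‖a k₁ l₁‖ * ‖a (k - k₁) (l - l₁)‖ :=
        (norm_sum_le _ _).trans <| sum_le_sum fun _ _ =>
          (norm_sum_le _ _).trans_eq <| by simp_rw [norm_mul]
    _ ≤ ∑ k₁ ∈ Ico 1 k, ∑ l₁ ∈ range (l + 1), C ^ 2 * ρ ^ k *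
          ((invSqSucc k₁ * invSqSucc (k - k₁)) * (invSqSucc l₁ * invSqSucc (l - l₁))) := by
        refine sum_le_sum fun k₁ hk₁ => sum_le_sum fun l₁ _ => ?_
        rw [mem_Ico] at hk₁
        have h₁ := H k₁ hk₁.2 l₁
        have h₂ := H (k - k₁) (by omega) (l - l₁)
        calc ‖a k₁ l₁‖ * ‖a (k - k₁) (l - l₁)‖
            ≤ (C * ρ ^ k₁ * (invSqSucc k₁ * invSqSucc l₁)) *
                (C * ρ ^ (k - k₁) * (invSqSucc (k - k₁) * invSqSucc (l - l₁))) :=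
              mul_le_mul h₁ h₂ (norm_nonneg _) ((norm_nonneg _).trans h₁)
          _ = _ := by
              rw [← pow_mul_pow_sub ρ hk₁.2.le]
              ring
    _ = C ^ 2 * ρ ^ k * ((∑ k₁ ∈ Ico 1 k, invSqSucc k₁ * invSqSucc (k - k₁)) *
          ∑ l₁ ∈ range (l + 1), invSqSucc l₁ * invSqSucc (l - l₁)) := by
        rw [sum_mul_sum, mul_sum]
        refine sum_congr rfl fun _ _ => ?_
        rw [mul_sum]
    _ ≤ C ^ 2 * ρ ^ k * ((8 * invSqSucc (k + 1)) * (8 * invSqSucc (l + 1))) := by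
        refine mul_le_mul_of_nonneg_left (mul_le_mul ?_ (sum_range_invSqSucc_mul_le l)
          (sum_nonneg fun _ _ => mul_nonneg (hw _) (hw _)) (by linarith [hw (k + 1)]))
          (by positivity)
        refine (sum_le_sum_of_subset_of_nonneg ?_ fun _ _ _ => mul_nonneg (hw _) (hw _)).trans
            (sum_range_invSqSucc_mul_le k)
        intro i hi
        rw [mem_Ico] at hi
        rw [mem_range]
        omega

theorem exists_norm_le_geometric_mul_invSqSucc {a : ℕ → ℕ → ℂ} {A B c : ℝ}
    (hA : 0 ≤ A) (hB : 0 ≤ B) (h₀ : ∀ l, a 0 l = 0) (h₁ : ∀ l, ‖a 1 l‖ ≤ c * invSqSucc l)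
    (hrec : ∀ k l, 1 ≤ k → ‖a (k + 1) l‖ ≤ A * ‖a k l‖ + B * ‖dconv a k l‖) :
    ∃ C ρ : ℝ, 0 < C ∧ 1 ≤ ρ ∧
      ∀ k l, ‖a k l‖ ≤ C * ρ ^ k * (invSqSucc k * invSqSucc l) := by
  set C := max (4 * c) 1
  set ρ := max (4 * A + 64 * B * C) 1
  have hC : 0 < C := lt_max_of_lt_right one_pos
  have hρ : 1 ≤ ρ := le_max_right _ _
  have hw := fun n => (invSqSucc_pos n).le
  refine ⟨C, ρ, hC, hρ, fun k => ?_⟩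
  induction k using Nat.strong_induction_on with | _ k IH => ?_
  intro l
  match k with
  | 0 => rw [h₀, norm_zero]; exact mul_nonneg (by positivity) (mul_nonneg (hw 0) (hw l))
  | 1 =>
    have h4c : 4 * c ≤ C * ρ := (le_max_left _ _).trans (le_mul_of_one_le_right hC.le hρ)
    calc ‖a 1 l‖ ≤ c * invSqSucc l := h₁ l
      _ ≤ C * ρ ^ 1 * (invSqSucc 1 * invSqSucc l) := by
        rw [pow_one, show invSqSucc 1 = 4⁻¹ by norm_num [invSqSucc]]
        nlinarith [hw l]
  | k + 2 =>
    have hprev := IH (k + 1) (by omega) l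
    have hconv := norm_dconv_le (k := k + 1) (by linarith) (fun k' hk' l' => IH k' (by omega) l') l
    have hk := invSqSucc_le_four_mul_succ (k + 1)
    have hl := invSqSucc_succ_le l
    have hCρ : 0 ≤ C * ρ ^ (k + 1) := by positivity
    calc ‖a (k + 2) l‖ ≤ A * ‖a (k + 1) l‖ + B * ‖dconv a (k + 1) l‖ := hrec (k + 1) l (by omega)
      _ ≤ A * (C * ρ ^ (k + 1) * (4 * invSqSucc (k + 2) * invSqSucc l)) +
          B * (C ^ 2 * ρ ^ (k + 1) * (8 * invSqSucc (k + 2) * (8 * invSqSucc l))) := by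
        gcongr
        · exact hprev.trans (by gcongr; exact hw l)
        · exact hconv.trans (by gcongr; exact mul_nonneg (by norm_num) (hw _))
      _ = (4 * A + 64 * B * C) * (C * ρ ^ (k + 1) * (invSqSucc (k + 2) * invSqSucc l)) := by
        ring
      _ ≤ ρ * (C * ρ ^ (k + 1) * (invSqSucc (k + 2) * invSqSucc l)) := by
        gcongr
        · exact mul_nonneg hCρ (mul_nonneg (hw _) (hw _))
        · exact le_max_left _ _
      _ = C * ρ ^ (k + 2) * (invSqSucc (k + 2) * invSqSucc l) := by ring

namespace IsDoubleRiccatiSeq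

variable {α : ℝ} {lam mu nu u : ℂ} {a : ℕ → ℕ → ℂ}

theorem norm_succ_le (ha : IsDoubleRiccatiSeq α lam mu nu u a) (hα : 1 / 2 < α) {k : ℕ}
    (hk : 1 ≤ k) (l : ℕ) :
    ‖a (k + 1) l‖ ≤
      (1 + α / (α - 1 / 2)) * (1 + α) * (‖mu‖ * ‖a k l‖ + ‖lam‖ * ‖dconv a k l‖) := by
  obtain ⟨-, -, -, hvan, hrec⟩ := ha
  have hs : 0 < α - 1 / 2 := by linarith
  have hM : 0 ≤ (1 + α / (α - 1 / 2)) * (1 + α) := by positivity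
  rcases lt_or_ge (k + 1) (kval l) with hlt | hge
  · rw [hvan _ _ hlt, norm_zero]
    exact mul_nonneg hM (by positivity)
  rw [hrec l (k + 1) (max_le hge (by omega)), Nat.add_sub_cancel, norm_mul, Complex.norm_real,
    Real.norm_eq_abs]
  set br := mu * a k l + lam * dconv a k l
  have hbr : ‖br‖ ≤ ‖mu‖ * ‖a k l‖ + ‖lam‖ * ‖dconv a k l‖ :=
    (norm_add_le _ _).trans_eq (by rw [norm_mul, norm_mul])
  rcases eq_or_ne br 0 with hzero | hne
  · rw [hzero, norm_zero, zero_mul]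
    exact mul_nonneg hM (by positivity)
  -- a nonzero bracket forces `x := α k - l + 1 ≥ α - 1/2`, keeping the Gamma ratio bounded
  have h2l : 2 * l ≤ k + 2 := by
    have : a k l ≠ 0 ∨ dconv a k l ≠ 0 := by
      by_contra! h
      exact hne (by simp only [br, h.1, h.2, mul_zero, add_zero])
    rcases this with h | h
    · have := two_mul_le_succ_of_ne_zero hvan h
      omega
    · exact two_mul_le_add_two_of_dconv_ne_zero hvan h
  set x := α * k - l + 1
  have hx : α - 1 / 2 ≤ x := by
    have h2l' : 2 * (l : ℝ) ≤ k + 2 := by exact_mod_cast h2l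
    have hk' : (1 : ℝ) ≤ k := by exact_mod_cast hk
    nlinarith
  have hratio : Real.Gamma x / Real.Gamma (x + α) ≤ (1 + α / (α - 1 / 2)) * (1 + α) :=
    (Real.Gamma_div_Gamma_add_le (by linarith) (by linarith)).trans (by gcongr)
  have hratio₀ : 0 ≤ Real.Gamma x / Real.Gamma (x + α) :=
    div_nonneg (Real.Gamma_pos_of_pos (by linarith)).le (Real.Gamma_pos_of_pos (by linarith)).le
  push_cast
  rw [show α * ((k : ℝ) + 1 - 1) - l + 1 = x by ring, show α * ((k : ℝ) + 1) - l + 1 = x + α by ring,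
    abs_of_nonneg hratio₀, mul_comm]
  gcongr

theorem norm_one_le (ha : IsDoubleRiccatiSeq α lam mu nu u a) (l : ℕ) :
    ‖a 1 l‖ ≤ 4 * (‖a 1 0‖ + ‖a 1 1‖) * invSqSucc l := by
  match l with
  | 0 | 1 =>
    norm_num [invSqSucc]
    linarith [norm_nonneg (a 1 0), norm_nonneg (a 1 1)]
  | l + 2 =>
    rw [ha.2.2.1 (l + 2) (by omega), norm_zero]
    exact mul_nonneg (by positivity) (invSqSucc_pos _).le

theorem exists_norm_le (ha : IsDoubleRiccatiSeq α lam mu nu u a) (hα : 1 / 2 < α) :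
    ∃ C ρ : ℝ, 0 < C ∧ 1 ≤ ρ ∧
      ∀ k l, ‖a k l‖ ≤ C * ρ ^ k * (invSqSucc k * invSqSucc l) := by
  have hM : 0 ≤ (1 + α / (α - 1 / 2)) * (1 + α) := by
    have : 0 < α - 1 / 2 := by linarith
    positivity
  refine exists_norm_le_geometric_mul_invSqSucc (mul_nonneg hM (norm_nonneg mu))
    (mul_nonneg hM (norm_nonneg lam)) (fun l => ha.2.2.2.1 0 l ?_) ha.norm_one_le
    fun k l hk => (ha.norm_succ_le hα hk l).trans_eq (by ring)
  unfold kval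
  omega

end IsDoubleRiccatiSeq

lemma invSqSucc_le_rpow {n m : ℕ} {β : ℝ} (hm : 1 ≤ m) (hmn : m ≤ n + 1) (hβ : -1 ≤ β) :
    invSqSucc n ≤ (m : ℝ) ^ β := by
  have hm' : (1 : ℝ) ≤ m := by exact_mod_cast hm
  have hmn' : (m : ℝ) ≤ n + 1 := by exact_mod_cast hmn
  calc invSqSucc n ≤ ((n : ℝ) + 1)⁻¹ :=
        inv_anti₀ (by positivity) (le_self_pow₀ (by linarith) two_ne_zero)
    _ ≤ (m : ℝ)⁻¹ := inv_anti₀ (by positivity) hmn'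
    _ = (m : ℝ) ^ (-1 : ℝ) := (Real.rpow_neg_one _).symm
    _ ≤ (m : ℝ) ^ β := Real.rpow_le_rpow_of_exponent_le hm' hβ

theorem summable_norm_mul_rpow_of_norm_le {a : ℕ → ℕ → ℂ} (hvan : ∀ k l, k < kval l → a k l = 0)
    {α C ρ t : ℝ} (hC : 0 ≤ C) (hbound : ∀ k l, ‖a k l‖ ≤ C * ρ ^ k * (invSqSucc k * invSqSucc l))
    (hρ : 0 ≤ ρ) (ht : 0 < t) (ht₁ : t ≤ 1) (hρt : ρ * t ^ (α - 1 / 2) ≤ 1) :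
    Summable fun p : ℕ × ℕ => ‖a p.1 p.2‖ * t ^ (α * (p.1 : ℝ) - (p.2 : ℝ)) := by
  have hw := fun n => (invSqSucc_pos n).le
  refine Summable.of_nonneg_of_le (fun p => by positivity) (fun ⟨k, l⟩ => ?_)
    ((summable_invSqSucc.mul_of_nonneg summable_invSqSucc hw hw).mul_left (C * t ^ (-1 / 2 : ℝ)))
  dsimp only
  rcases eq_or_ne (a k l) 0 with h | h
  · rw [h, norm_zero, zero_mul]
    exact mul_nonneg (by positivity) (mul_nonneg (hw _) (hw _))
  -- since `2 l ≤ k + 1`, the power splits as `t^((α - 1/2) k) * t^(k/2 - l)` with `k/2 - l ≥ -1/2`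
  have h2l : 2 * (l : ℝ) ≤ k + 1 := by exact_mod_cast two_mul_le_succ_of_ne_zero hvan h
  have hpow : ρ ^ k * t ^ (α * (k : ℝ) - l) ≤ t ^ (-1 / 2 : ℝ) := by
    rw [show α * (k : ℝ) - l = (α - 1 / 2) * k + (k / 2 - l) by ring, Real.rpow_add ht,
      Real.rpow_mul_natCast ht.le, ← mul_assoc, ← mul_pow]
    calc (ρ * t ^ (α - 1 / 2)) ^ k * t ^ ((k : ℝ) / 2 - l) ≤ 1 * t ^ (-1 / 2 : ℝ) := by
          refine mul_le_mul (pow_le_one₀ (by positivity) hρt) ?_ (by positivity) zero_le_one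
          exact Real.rpow_le_rpow_of_exponent_ge ht ht₁ (by linarith)
      _ = t ^ (-1 / 2 : ℝ) := one_mul _
  calc ‖a k l‖ * t ^ (α * (k : ℝ) - l)
      ≤ C * ρ ^ k * (invSqSucc k * invSqSucc l) * t ^ (α * (k : ℝ) - l) := by
        gcongr
        exact hbound k l
    _ = C * (invSqSucc k * invSqSucc l) * (ρ ^ k * t ^ (α * (k : ℝ) - l)) := by ring
    _ ≤ C * (invSqSucc k * invSqSucc l) * t ^ (-1 / 2 : ℝ) := by
        gcongr
        exact mul_nonneg hC (mul_nonneg (hw _) (hw _))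
    _ = C * t ^ (-1 / 2 : ℝ) * (invSqSucc k * invSqSucc l) := by ring

theorem stmt_16_general (α : ℝ) (hα : 1/2 < α)
    (lam mu nu u : ℂ)
    (a : ℕ → ℕ → ℂ) (ha : IsDoubleRiccatiSeq α lam mu nu u a) :
    ∃ C θ ρ : ℝ, 0 < C ∧ 0 < θ ∧ 0 < ρ ∧
      (∀ l k : ℕ, kval l ≤ k →
        ‖a k l‖ ≤ C * θ ^ l * ρ ^ k * ((k - kval l + 1 : ℕ) : ℝ) ^ (α/2 - 1) *
          ((max l 1 : ℕ) : ℝ) ^ (α/2 - 1)) ∧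
      ∃ R : ℝ, 0 < R ∧ ∀ t : ℝ, 0 < t → t < R →
        Summable fun p : ℕ × ℕ => ‖a p.1 p.2‖ * t ^ (α * (p.1:ℝ) - (p.2:ℝ)) := by
  obtain ⟨C, ρ, hC, hρ, hbound⟩ := ha.exists_norm_le hα
  have hβ : -1 ≤ α / 2 - 1 := by linarith
  refine ⟨C, 1, ρ, hC, one_pos, by linarith, fun l k hk => ?_, ?_⟩
  · have hk' : invSqSucc k ≤ ((k - kval l + 1 : ℕ) : ℝ) ^ (α / 2 - 1) :=
      invSqSucc_le_rpow (by omega) (by omega) hβ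
    have hl' : invSqSucc l ≤ ((max l 1 : ℕ) : ℝ) ^ (α / 2 - 1) :=
      invSqSucc_le_rpow (le_max_right _ _) (by omega) hβ
    calc ‖a k l‖ ≤ C * ρ ^ k * (invSqSucc k * invSqSucc l) := hbound k l
      _ ≤ C * ρ ^ k * (((k - kval l + 1 : ℕ) : ℝ) ^ (α / 2 - 1) *
            ((max l 1 : ℕ) : ℝ) ^ (α / 2 - 1)) :=
        mul_le_mul_of_nonneg_left (mul_le_mul hk' hl' (invSqSucc_pos l).le (by positivity))
          (by positivity)
      _ = _ := by ring
  -- for `t < R := ρ^(-1/(α - 1/2))` the growth `ρ^k` is absorbed by `t^((α - 1/2) k)`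
  have hs : 0 < α - 1 / 2 := by linarith
  have hρ₀ : 0 ≤ ρ⁻¹ := by positivity
  refine ⟨(ρ⁻¹) ^ (α - 1 / 2)⁻¹, by positivity, fun t ht htR => ?_⟩
  refine summable_norm_mul_rpow_of_norm_le ha.2.2.2.1 hC.le hbound (by linarith) ht
    (htR.le.trans (Real.rpow_le_one hρ₀ (inv_le_one_of_one_le₀ hρ) (by positivity))) ?_
  calc ρ * t ^ (α - 1 / 2) ≤ ρ * ((ρ⁻¹) ^ (α - 1 / 2)⁻¹) ^ (α - 1 / 2) := by gcongr
    _ = 1 := by rw [Real.rpow_inv_rpow hρ₀ hs.ne', mul_inv_cancel₀ (by positivity)]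

theorem stmt_16 (α : ℝ) (hα : 1/2 < α) (hα1 : α < 1)
    (lam mu nu u : ℂ)
    (a : ℕ → ℕ → ℂ) (ha : IsDoubleRiccatiSeq α lam mu nu u a) :
    ∃ C θ ρ : ℝ, 0 < C ∧ 0 < θ ∧ 0 < ρ ∧
      (∀ l k : ℕ, kval l ≤ k →
        ‖a k l‖ ≤ C * θ ^ l * ρ ^ k * ((k - kval l + 1 : ℕ) : ℝ) ^ (α/2 - 1) *
          ((max l 1 : ℕ) : ℝ) ^ (α/2 - 1)) ∧
      ∃ R : ℝ, 0 < R ∧ ∀ t : ℝ, 0 < t → t < R →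
        Summable fun p : ℕ × ℕ => ‖a p.1 p.2‖ * t ^ (α * (p.1:ℝ) - (p.2:ℝ)) :=
  stmt_16_general α hα lam mu nu u a ha
end

section
/- Let α ∈ (1/2,1) and let λ, μ, ν, u be complex numbers. Define c_1 = 1 and, for ℓ ≥ 2, c_ℓ = (Γ((2α−1)(ℓ−1)) / Γ((2α−1)(ℓ−1)+α)) · Σ_{j=1}^{ℓ−1} c_j c_{ℓ−j}. Then the starting coefficients of the doubly indexed sequence satisfy a_{2ℓ−1,ℓ} = λ^{ℓ−1}·(u/Γ(α))^{ℓ}·c_ℓ for every integer ℓ ≥ 1. -/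
open Finset

theorem stmt_17 (α : ℝ) (hα : 1/2 < α) (hα1 : α < 1)
    (lam mu nu u : ℂ)
    (a : ℕ → ℕ → ℂ) (ha : IsDoubleRiccatiSeq α lam mu nu u a)
    (c : ℕ → ℂ) (hc1 : c 1 = 1)
    (hcrec : ∀ l : ℕ, 2 ≤ l →
      c l = ((Real.Gamma ((2*α - 1) * ((l:ℝ) - 1)) /
          Real.Gamma ((2*α - 1) * ((l:ℝ) - 1) + α) : ℝ) : ℂ) *
        ∑ j ∈ Finset.Ico 1 l, c j * c (l - j)) :
    ∀ l : ℕ, 1 ≤ l →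
      a (2 * l - 1) l = lam ^ (l - 1) * (u / (Real.Gamma α : ℂ)) ^ l * c l := by
  obtain ⟨h10, h11, h1l, hzero, hrec⟩ := ha
  set w : ℂ := u / (Real.Gamma α : ℂ) with hw
  intro l
  induction l using Nat.strong_induction_on with
  | _ l ih =>
  intro hl
  rcases Nat.lt_or_ge l 2 with h2 | h2
  · interval_cases l
    simpa [hc1] using h11
  · obtain ⟨m, rfl⟩ : ∃ m, l = m + 2 := ⟨l - 2, by omega⟩
    have ek : 2 * (m + 2) - 1 = 2 * m + 3 := by omega
    rw [ek]
    have hk := hrec (m + 2) (2 * m + 3) (by simp [kval]; omega)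
    have e1 : (2 * m + 3 - 1 : ℕ) = 2 * m + 2 := by omega
    rw [e1] at hk
    have hz1 : a (2 * m + 2) (m + 2) = 0 := hzero _ _ (by simp [kval]; omega)
    -- compute the convolution
    have hdc : dconv a (2 * m + 2) (m + 2)
        = lam ^ m * w ^ (m + 2) * ∑ j ∈ Finset.Ico 1 (m + 2), c j * c (m + 2 - j) := by
      unfold dconv
      rw [Finset.sum_comm]
      rw [← Finset.sum_subset (s₁ := Finset.Ico 1 (m + 2)) (s₂ := Finset.range (m + 2 + 1))
        (by intro x hx; simp at hx ⊢; omega) ?_]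
      · rw [Finset.mul_sum]
        apply Finset.sum_congr rfl
        intro j hj
        simp only [Finset.mem_Ico] at hj
        rw [Finset.sum_eq_single_of_mem (2 * j - 1)
          (by simp [Finset.mem_Ico]; omega) ?_]
        · have h1 := ih j (by omega) (by omega)
          have h2 := ih (m + 2 - j) (by omega) (by omega)
          have e2 : 2 * m + 2 - (2 * j - 1) = 2 * (m + 2 - j) - 1 := by omega
          rw [e2, h1, h2]
          obtain ⟨i, rfl⟩ : ∃ i, j = i + 1 := ⟨j - 1, by omega⟩
          obtain ⟨d, rfl⟩ : ∃ d, m = i + d := ⟨m - i, by omega⟩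
          have e3 : i + 1 - 1 = i := by omega
          have e4 : i + d + 2 - (i + 1) = d + 1 := by omega
          have e5 : d + 1 - 1 = d := by omega
          rw [e3, e4, e5]
          ring
        · intro k₁ hk₁ hne
          simp only [Finset.mem_Ico] at hk₁
          rcases Nat.lt_or_ge k₁ (2 * j - 1) with hlt | hge
          · rw [hzero k₁ j (by simp [kval]; omega), zero_mul]
          · rw [hzero (2 * m + 2 - k₁) (m + 2 - j) (by simp [kval]; omega), mul_zero]
      · intro x hx hnx
        simp only [Finset.mem_range] at hx
        simp only [Finset.mem_Ico] at hnx
        rcases Nat.eq_zero_or_pos x with rfl | hx1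
        · apply Finset.sum_eq_zero
          intro k₁ hk₁
          simp only [Finset.mem_Ico] at hk₁
          rw [hzero (2 * m + 2 - k₁) (m + 2 - 0) (by simp [kval]; omega), mul_zero]
        · have : x = m + 2 := by omega
          subst this
          apply Finset.sum_eq_zero
          intro k₁ hk₁
          simp only [Finset.mem_Ico] at hk₁
          rw [hzero k₁ (m + 2) (by simp [kval]; omega), zero_mul]
    rw [hk, hz1, hdc, hcrec (m + 2) (by omega)]
    have hg : (Real.Gamma (α * (((2 * m + 3 : ℕ) : ℝ) - 1) - ((m + 2 : ℕ) : ℝ) + 1) /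
          Real.Gamma (α * ((2 * m + 3 : ℕ) : ℝ) - ((m + 2 : ℕ) : ℝ) + 1) : ℝ)
        = (Real.Gamma ((2 * α - 1) * (((m + 2 : ℕ) : ℝ) - 1)) /
          Real.Gamma ((2 * α - 1) * (((m + 2 : ℕ) : ℝ) - 1) + α) : ℝ) := by
      congr 1 <;> congr 1 <;> push_cast <;> ring
    rw [hg]
    have e6 : m + 2 - 1 = m + 1 := by omega
    rw [e6]
    ring
end
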